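/- (Taylor-remainder bound in the proof of Lemma 3.) Let P_i denote the cumulative distribution function of Y_i and define Ū_{2n}(δ) := ∑_{i=1}^n ∫_0^{x_iᵀδ/√n} ( P_i(x_iᵀβ₀+s) − P_i(x_iᵀβ₀) ) ds for δ∈ℝ^p (signed integrals). Suppose ‖x_i‖≤M for all i and there exist C,η,r₀>0 with |p_i(x_iᵀβ₀+r) − p_i(x_iᵀβ₀)| ≤ C|r|^η for all |r|≤r₀ and all i. Then for every δ∈ℝ^p and every n with M‖δ‖/√n ≤ r₀, | Ū_{2n}(δ) − (1/(2n))∑_{i=1}^n p_i(x_iᵀβ₀)(x_iᵀδ)² | ≤ C·( max_{1≤i≤n} |x_iᵀδ|/√n )^η · (1/n)∑_{i=1}^n (x_iᵀδ)². In particular, for every compact K⊂ℝ^p, sup_{δ∈K} | Ū_{2n}(δ) − (1/(2n))∑_{i=1}^n p_i(x_iᵀβ₀)(x_iᵀδ)² | → 0 as n→∞. -/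

import Mathlib

/-!
Write `b = xᵢᵀβ₀` and `a = xᵢᵀδ/√n`. Since `Pᵢ(b+s) - Pᵢ(b) = ∫₀ˢ pᵢ(b+u) du`, the `i`-th summand
of `Ū₂ₙ(δ)` is the iterated integral `∫₀ᵃ ∫₀ˢ pᵢ(b+u) du ds`, which equals `pᵢ(b) a²/2` when
`pᵢ(b+u)` is frozen at `u = 0`. On the range of integration, `|u| ≤ |a| ≤ M‖δ‖/√n ≤ r₀`, so the
Hölder condition makes the integrand err by at most `C |a|^η`, and the summand by at most
`C |a|^η a²`; bounding `|a|` by the maximum over `i` and summing gives the first claim. On a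
compact `K ⊆ closedBall 0 R` every `|xᵢᵀδ|` is at most `MR`, so the right-hand side is at most
`C (MR/√n)^η (MR)²`, which tends to `0`.
-/

open MeasureTheory Filter Real intervalIntegral
open Finset
open scoped RealInnerProductSpace Interval

theorem integral_Iic_add_sub_integral_Iic {f : ℝ → ℝ} (hf : Integrable f) (b s : ℝ) :
    (∫ y in Set.Iic (b + s), f y) - ∫ y in Set.Iic b, f y = ∫ u in (0:ℝ)..s, f (b + u) := by
  rw [integral_Iic_sub_Iic hf.integrableOn hf.integrableOn, integral_comp_add_left f b, add_zero]

theorem abs_le_abs_of_mem_uIoc_zero {s u : ℝ} (hu : u ∈ Ι (0:ℝ) s) : |u| ≤ |s| := by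
  simpa using Set.abs_sub_left_of_mem_uIcc (Set.uIoc_subset_uIcc hu)

theorem abs_integral_sub_mul_le {g : ℝ → ℝ} {s ε : ℝ} (hg : IntervalIntegrable g volume 0 s)
    (h : ∀ u ∈ Ι (0:ℝ) s, |g u - g 0| ≤ ε) :
    |(∫ u in (0:ℝ)..s, g u) - g 0 * s| ≤ ε * |s| := by
  have : (∫ u in (0:ℝ)..s, g u) - g 0 * s = ∫ u in (0:ℝ)..s, (g u - g 0) := by
    rw [intervalIntegral.integral_sub hg intervalIntegrable_const, intervalIntegral.integral_const,
      smul_eq_mul, sub_zero, mul_comm]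
  simpa [this] using norm_integral_le_of_norm_le_const (f := fun u => g u - g 0) h

theorem abs_integral_integral_sub_mul_sq_le {g : ℝ → ℝ} {a ε : ℝ} (hg : LocallyIntegrable g)
    (h : ∀ u, |u| ≤ |a| → |g u - g 0| ≤ ε) :
    |(∫ s in (0:ℝ)..a, ∫ u in (0:ℝ)..s, g u) - g 0 * a ^ 2 / 2| ≤ ε * a ^ 2 := by
  have hg' (s t : ℝ) : IntervalIntegrable g volume s t :=
    (hg.integrableOn_isCompact isCompact_uIcc).intervalIntegrable
  have hε : 0 ≤ ε := (abs_nonneg _).trans (h 0 (by simp))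
  have hlin : (∫ s in (0:ℝ)..a, g 0 * s) = g 0 * a ^ 2 / 2 := by
    rw [intervalIntegral.integral_const_mul, integral_id]; ring
  have hfirst : ∀ s ∈ Ι (0:ℝ) a, |(∫ u in (0:ℝ)..s, g u) - g 0 * s| ≤ ε * |a| := fun s hs =>
    have hsa := abs_le_abs_of_mem_uIoc_zero hs
    (abs_integral_sub_mul_le (hg' 0 s) fun u hu =>
      h u ((abs_le_abs_of_mem_uIoc_zero hu).trans hsa)).trans (mul_le_mul_of_nonneg_left hsa hε)
  rw [← hlin, ← intervalIntegral.integral_sub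
    ((continuous_primitive hg' 0).intervalIntegrable 0 a)
    ((continuous_const_mul (g 0)).intervalIntegrable 0 a)]
  simpa [mul_assoc, ← sq, sq_abs] using
    norm_integral_le_of_norm_le_const (f := fun s => (∫ u in (0:ℝ)..s, g u) - g 0 * s) hfirst

theorem abs_integral_cdf_increment_sub_le {f : ℝ → ℝ} (hf : Integrable f) {b a ε : ℝ}
    (h : ∀ u, |u| ≤ |a| → |f (b + u) - f b| ≤ ε) :
    |(∫ t in (0:ℝ)..a, ((∫ y in Set.Iic (b + t), f y) - ∫ y in Set.Iic b, f y)) -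
      f b * a ^ 2 / 2| ≤ ε * a ^ 2 := by
  simp_rw [integral_Iic_add_sub_integral_Iic hf b]
  simpa using abs_integral_integral_sub_mul_sq_le (g := fun u => f (b + u))
    (hf.comp_add_left b).locallyIntegrable (by simpa using h)

theorem abs_sum_integral_cdf_increment_sub_le {ι : Type*} {s : Finset ι} (hs : s.Nonempty)
    {f : ι → ℝ → ℝ} (hf : ∀ i ∈ s, Integrable (f i)) (b a : ι → ℝ) {C η : ℝ} (hC : 0 ≤ C)
    (hη : 0 ≤ η) (hH : ∀ i ∈ s, ∀ u, |u| ≤ |a i| → |f i (b i + u) - f i (b i)| ≤ C * |u| ^ η) :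
    |∑ i ∈ s, (∫ t in (0:ℝ)..a i,
        ((∫ y in Set.Iic (b i + t), f i y) - ∫ y in Set.Iic (b i), f i y)) -
      ∑ i ∈ s, f i (b i) * a i ^ 2 / 2| ≤
      C * s.sup' hs (fun i => |a i|) ^ η * ∑ i ∈ s, a i ^ 2 := by
  rw [← sum_sub_distrib, mul_sum]
  refine (abs_sum_le_sum_abs _ _).trans (sum_le_sum fun i hi => ?_)
  have hai : |a i| ≤ s.sup' hs (fun i => |a i|) := le_sup' (fun i => |a i|) hi
  refine abs_integral_cdf_increment_sub_le (hf i hi) fun u hu => (hH i hi u hu).trans ?_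
  gcongr
  exact hu.trans hai

theorem abs_sum_integral_cdf_increment_div_sqrt_sub_le {n : ℕ} (hn : 0 < n) {f : ℕ → ℝ → ℝ}
    (hf : ∀ i ∈ range n, Integrable (f i)) (b z : ℕ → ℝ) {C η : ℝ} (hC : 0 ≤ C)
    (hη : 0 ≤ η)
    (hH : ∀ i ∈ range n, ∀ u, |u| ≤ |z i| / √n → |f i (b i + u) - f i (b i)| ≤ C * |u| ^ η) :
    |(∑ i ∈ range n, ∫ t in (0:ℝ)..(z i / √n),
        ((∫ y in Set.Iic (b i + t), f i y) - ∫ y in Set.Iic (b i), f i y)) -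
      (2 * (n:ℝ))⁻¹ * ∑ i ∈ range n, f i (b i) * z i ^ 2| ≤
      C * ((range n).sup' (nonempty_range_iff.mpr hn.ne')
        (fun i => |z i| / √n)) ^ η * ((n:ℝ)⁻¹ * ∑ i ∈ range n, z i ^ 2) := by
  have hsqrt : 0 < √(n:ℝ) := sqrt_pos.mpr (Nat.cast_pos.mpr hn)
  have habs (i : ℕ) : |z i / √n| = |z i| / √n := by rw [abs_div, abs_of_pos hsqrt]
  have hsq (i : ℕ) : (z i / √n) ^ 2 = z i ^ 2 / n := by rw [div_pow, sq_sqrt (Nat.cast_nonneg n)]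
  have := abs_sum_integral_cdf_increment_sub_le (nonempty_range_iff.mpr hn.ne') hf b
    (fun i => z i / √n) hC hη (by simpa only [habs] using hH)
  simp only [habs, hsq] at this
  convert this using 3 <;> rw [mul_sum] <;> congr 1 <;> ext i <;> ring

theorem mul_sup'_rpow_mul_mean_sq_le {n : ℕ} (hn : 0 < n) {z : ℕ → ℝ} {L C η : ℝ} (hC : 0 ≤ C)
    (hη : 0 ≤ η) (hz : ∀ i, |z i| ≤ L) :
    C * ((range n).sup' (nonempty_range_iff.mpr hn.ne')
        (fun i => |z i| / √n)) ^ η * ((n:ℝ)⁻¹ * ∑ i ∈ range n, z i ^ 2) ≤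
      C * (L / √n) ^ η * L ^ 2 := by
  have hsup0 : 0 ≤ (range n).sup' (nonempty_range_iff.mpr hn.ne')
      (fun i => |z i| / √n) :=
    (by positivity : 0 ≤ |z 0| / √n).trans
      (le_sup' (fun i => |z i| / √n) (mem_range.mpr hn))
  have hsup : (range n).sup' (nonempty_range_iff.mpr hn.ne')
      (fun i => |z i| / √n) ≤ L / √n :=
    sup'_le _ _ fun i _ => by gcongr; exact hz i
  have hmean : (n:ℝ)⁻¹ * ∑ i ∈ range n, z i ^ 2 ≤ L ^ 2 := by
    rw [inv_mul_le_iff₀ (Nat.cast_pos.mpr hn)]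
    calc ∑ i ∈ range n, z i ^ 2 ≤ ∑ i ∈ range n, L ^ 2 :=
          sum_le_sum fun i _ => sq_le_sq' (abs_le.mp (hz i)).1 (abs_le.mp (hz i)).2
      _ = n * L ^ 2 := by simp
  have hL : 0 ≤ L := (abs_nonneg _).trans (hz 0)
  gcongr

theorem tendsto_biSup_abs_nhds_zero {α β : Type*} {l : Filter β} (K : Set α) {F : β → α → ℝ}
    {B : β → ℝ} (hB : Tendsto B l (nhds 0)) (hB0 : ∀ n, 0 ≤ B n)
    (hFB : ∀ᶠ n in l, ∀ δ ∈ K, |F n δ| ≤ B n) :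
    Tendsto (fun n => ⨆ δ ∈ K, |F n δ|) l (nhds 0) := by
  refine tendsto_of_tendsto_of_tendsto_of_le_of_le' tendsto_const_nhds hB
    (Eventually.of_forall fun n =>
      Real.iSup_nonneg fun δ => Real.iSup_nonneg fun _ => abs_nonneg _) ?_
  filter_upwards [hFB] with n hn
  exact Real.iSup_le (fun δ => Real.iSup_le (hn δ) (hB0 n)) (hB0 n)

theorem taylor_remainder_bound_lemma3_general
    (p : ℕ)
    (pd : ℕ → ℝ → ℝ)
    (hpdint : ∀ i, Integrable (pd i))
    (x : ℕ → EuclideanSpace ℝ (Fin p)) (β₀ : EuclideanSpace ℝ (Fin p))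
    (M : ℝ) (hx : ∀ i, ‖x i‖ ≤ M)
    (C η r₀ : ℝ) (hC : 0 < C) (hη : 0 < η) (hr₀ : 0 < r₀)
    (hHolder : ∀ i, ∀ r : ℝ, |r| ≤ r₀ →
      |pd i (⟪x i, β₀⟫ + r) - pd i ⟪x i, β₀⟫| ≤ C * |r| ^ η) :
    (∀ δ : EuclideanSpace ℝ (Fin p), ∀ n : ℕ, ∀ hn : 0 < n,
      M * ‖δ‖ / Real.sqrt n ≤ r₀ →
      |(∑ i ∈ Finset.range n,
          ∫ s in (0:ℝ)..(⟪x i, δ⟫ / Real.sqrt n),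
            ((∫ y in Set.Iic (⟪x i, β₀⟫ + s), pd i y) - ∫ y in Set.Iic (⟪x i, β₀⟫), pd i y)) -
        (2 * (n:ℝ))⁻¹ * ∑ i ∈ Finset.range n, pd i ⟪x i, β₀⟫ * ⟪x i, δ⟫ ^ 2| ≤
      C * ((Finset.range n).sup' (Finset.nonempty_range_iff.mpr hn.ne')
            (fun i => |⟪x i, δ⟫| / Real.sqrt n)) ^ η *
          ((n:ℝ)⁻¹ * ∑ i ∈ Finset.range n, ⟪x i, δ⟫ ^ 2)) ∧
    (∀ K : Set (EuclideanSpace ℝ (Fin p)), IsCompact K →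
      Tendsto (fun n : ℕ => ⨆ δ ∈ K,
        |(∑ i ∈ Finset.range n,
            ∫ s in (0:ℝ)..(⟪x i, δ⟫ / Real.sqrt n),
              ((∫ y in Set.Iic (⟪x i, β₀⟫ + s), pd i y) - ∫ y in Set.Iic (⟪x i, β₀⟫), pd i y)) -
          (2 * (n:ℝ))⁻¹ * ∑ i ∈ Finset.range n, pd i ⟪x i, β₀⟫ * ⟪x i, δ⟫ ^ 2|)
        atTop (nhds 0)) := by
  have hM : 0 ≤ M := (norm_nonneg _).trans (hx 0)
  have hinner (δ : EuclideanSpace ℝ (Fin p)) (i : ℕ) : |⟪x i, δ⟫| ≤ M * ‖δ‖ :=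
    (abs_real_inner_le_norm _ _).trans (mul_le_mul_of_nonneg_right (hx i) (norm_nonneg δ))
  have bound (δ : EuclideanSpace ℝ (Fin p)) (n : ℕ) (hn : 0 < n) (hδn : M * ‖δ‖ / √n ≤ r₀) :=
    abs_sum_integral_cdf_increment_div_sqrt_sub_le hn (fun i _ => hpdint i)
      (fun i => ⟪x i, β₀⟫) (fun i => ⟪x i, δ⟫) hC.le hη.le
      fun i _ u hu => hHolder i u <| hu.trans <|
        (div_le_div_of_nonneg_right (hinner δ i) (sqrt_nonneg _)).trans hδn
  refine ⟨bound, fun K hK => ?_⟩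
  obtain ⟨R, hR, hKR⟩ := hK.isBounded.subset_closedBall_lt 0 0
  have hlim : Tendsto (fun n : ℕ => M * R / √n) atTop (nhds 0) :=
    tendsto_const_nhds.div_atTop (tendsto_sqrt_atTop.comp tendsto_natCast_atTop_atTop)
  refine tendsto_biSup_abs_nhds_zero K
    (B := fun n : ℕ => C * (M * R / √n) ^ η * (M * R) ^ 2) ?_ (fun n => by positivity) ?_
  · simpa [zero_rpow hη.ne'] using
      ((hlim.rpow_const (Or.inr hη.le)).const_mul C).mul_const ((M * R) ^ 2)
  filter_upwards [hlim.eventually (ge_mem_nhds hr₀), eventually_gt_atTop 0] with n hnr hn δ hδ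
  have hδR : ‖δ‖ ≤ R := by simpa using hKR hδ
  have hδn : M * ‖δ‖ / √n ≤ r₀ :=
    (div_le_div_of_nonneg_right (mul_le_mul_of_nonneg_left hδR hM) (sqrt_nonneg _)).trans hnr
  exact (bound δ n hn hδn).trans
    (mul_sup'_rpow_mul_mean_sq_le hn hC.le hη.le fun i => (hinner δ i).trans (by gcongr))

/-- **Taylor-remainder bound in the proof of Lemma 3.**
With `P_i(t) = ∫_{-∞}^t p_i` the CDF of `Y_i` and
`Ū_{2n}(δ) = ∑_{i<n} ∫_0^{xᵢᵀδ/√n} (P_i(xᵢᵀβ₀+s) - P_i(xᵢᵀβ₀)) ds`, if `‖xᵢ‖ ≤ M` and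
`|p_i(xᵢᵀβ₀+r) - p_i(xᵢᵀβ₀)| ≤ C|r|^η` for `|r| ≤ r₀`, then the stated quadratic
approximation bound holds, and the approximation is uniform on compacts. -/
theorem taylor_remainder_bound_lemma3
    (p : ℕ) (τ : ℝ) (hτ : τ ∈ Set.Ioo (0:ℝ) 1)
    (pd : ℕ → ℝ → ℝ) (hpd0 : ∀ i y, 0 ≤ pd i y)
    (hpdint : ∀ i, Integrable (pd i)) (hpd1 : ∀ i, (∫ y : ℝ, pd i y) = 1)
    (x : ℕ → EuclideanSpace ℝ (Fin p)) (β₀ : EuclideanSpace ℝ (Fin p))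
    (hquant : ∀ i, (∫ y in Set.Iic (⟪x i, β₀⟫), pd i y) = τ)
    (M : ℝ) (hx : ∀ i, ‖x i‖ ≤ M)
    (C η r₀ : ℝ) (hC : 0 < C) (hη : 0 < η) (hr₀ : 0 < r₀)
    (hHolder : ∀ i, ∀ r : ℝ, |r| ≤ r₀ →
      |pd i (⟪x i, β₀⟫ + r) - pd i ⟪x i, β₀⟫| ≤ C * |r| ^ η) :
    (∀ δ : EuclideanSpace ℝ (Fin p), ∀ n : ℕ, ∀ hn : 0 < n,
      M * ‖δ‖ / Real.sqrt n ≤ r₀ →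
      |(∑ i ∈ Finset.range n,
          ∫ s in (0:ℝ)..(⟪x i, δ⟫ / Real.sqrt n),
            ((∫ y in Set.Iic (⟪x i, β₀⟫ + s), pd i y) - ∫ y in Set.Iic (⟪x i, β₀⟫), pd i y)) -
        (2 * (n:ℝ))⁻¹ * ∑ i ∈ Finset.range n, pd i ⟪x i, β₀⟫ * ⟪x i, δ⟫ ^ 2| ≤
      C * ((Finset.range n).sup' (Finset.nonempty_range_iff.mpr hn.ne')
            (fun i => |⟪x i, δ⟫| / Real.sqrt n)) ^ η *
          ((n:ℝ)⁻¹ * ∑ i ∈ Finset.range n, ⟪x i, δ⟫ ^ 2)) ∧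
    (∀ K : Set (EuclideanSpace ℝ (Fin p)), IsCompact K →
      Tendsto (fun n : ℕ => ⨆ δ ∈ K,
        |(∑ i ∈ Finset.range n,
            ∫ s in (0:ℝ)..(⟪x i, δ⟫ / Real.sqrt n),
              ((∫ y in Set.Iic (⟪x i, β₀⟫ + s), pd i y) - ∫ y in Set.Iic (⟪x i, β₀⟫), pd i y)) -
          (2 * (n:ℝ))⁻¹ * ∑ i ∈ Finset.range n, pd i ⟪x i, β₀⟫ * ⟪x i, δ⟫ ^ 2|)
        atTop (nhds 0)) :=
  taylor_remainder_bound_lemma3_general p pd hpdint x β₀ M hx C η r₀ hC hη hr₀ hHolder
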